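/- If for some fixed j the operator X_j is a linear combination X_j = a_1 X_1 + ... + a_{j-1} X_{j-1} of the operators X_1, ..., X_{j-1}, then every operator X_k for k ≥ j is a linear combination of X_1, ..., X_{j-1}; in particular X_{j+1} = D^{-1}(a_1) X_1 + ... + D^{-1}(a_{j-1}) X_j, using the conjugation relation X_{k+1} = \bar{D}^{-1} X_k \bar{D}. -/

import Mathlib

/-!
Conjugation by `D̄` is a `σ`-semilinear map `T` with `T X_k = X_{k+1}`, so applying it to
`X_j = ∑ aᵢ Xᵢ` gives the formula for `X_{j+1}`. Moreover `T` maps `span {X₁, …, X_{j-1}}` into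
`span {X₂, …, X_j}`, which lies in the original span as soon as `X_j` does; hence the span is
`T`-stable and contains every `X_k` with `k ≥ j`.
-/

open Submodule

section ShiftedSequence

variable {R V : Type*} [Semiring R] [AddCommMonoid V] [Module R V] {σ : R →+* R}
  (T : V →ₛₗ[σ] V) {X : ℕ → V}

theorem succ_eq_sum_of_eq_sum (hX : ∀ k, X (k + 1) = T (X k)) {s : Finset ℕ} {b : ℕ → R}
    {k : ℕ} (hk : X k = ∑ i ∈ s, b i • X i) :
    X (k + 1) = ∑ i ∈ s, σ (b i) • X (i + 1) := by
  simp only [hX, hk, map_sum, LinearMap.map_smulₛₗ]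

theorem map_mem_span_Ico (hX : ∀ k, X (k + 1) = T (X k)) {m j : ℕ}
    (hj : X j ∈ span R (X '' Set.Ico m j)) {x : V} (hx : x ∈ span R (X '' Set.Ico m j)) :
    T x ∈ span R (X '' Set.Ico m j) := by
  induction hx using span_induction with
  | mem _ hy =>
    obtain ⟨i, ⟨hmi, hij⟩, rfl⟩ := hy
    rw [← hX]
    by_cases h : i + 1 = j
    · rwa [h]
    · exact subset_span ⟨i + 1, ⟨by omega, by omega⟩, rfl⟩
  | zero => simp
  | add _ _ _ _ hTx hTy => simpa using add_mem hTx hTy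
  | smul c _ _ hTx => simpa using smul_mem _ (σ c) hTx

theorem mem_span_Ico_of_le (hX : ∀ k, X (k + 1) = T (X k)) {m j : ℕ}
    (hj : X j ∈ span R (X '' Set.Ico m j)) {k : ℕ} (hk : j ≤ k) :
    X k ∈ span R (X '' Set.Ico m j) := by
  induction k, hk using Nat.le_induction with
  | base => exact hj
  | succ n _ ih => rw [hX]; exact map_mem_span_Ico T hX hj ih

end ShiftedSequence

theorem stmt2 {R V : Type*} [CommRing R] [AddCommGroup V] [Module R V]
    (σ : R →+* R)                       -- action of the inverse shift on coefficients
    (T : V → V)                         -- conjugation `X ↦ D̄⁻¹ X D̄`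
    (hTadd : ∀ x y : V, T (x + y) = T x + T y)
    (hTsmul : ∀ (a : R) (x : V), T (a • x) = σ a • T x)
    (X : ℕ → V)
    (hX : ∀ k, X (k+1) = T (X k))
    (j : ℕ)
    (a : ℕ → R)
    (hcomb : X j = ∑ i ∈ Finset.Ico 1 j, a i • X i) :
    (X (j+1) = ∑ i ∈ Finset.Ico 1 j, σ (a i) • X (i+1)) ∧
    (∀ k, j ≤ k → ∃ b : ℕ → R, X k = ∑ i ∈ Finset.Ico 1 j, b i • X i) := by
  let L : V →ₛₗ[σ] V := { toFun := T, map_add' := hTadd, map_smul' := hTsmul }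
  have hL : ∀ k, X (k + 1) = L (X k) := hX
  have hspan : X j ∈ span R (X '' Set.Ico 1 j) := by
    rw [← Finset.coe_Ico, mem_span_image_finset_iff_exists_fun']
    exact ⟨a, hcomb.symm⟩
  refine ⟨succ_eq_sum_of_eq_sum L hL hcomb, fun k hk => ?_⟩
  have hmem := mem_span_Ico_of_le L hL hspan hk
  rw [← Finset.coe_Ico, mem_span_image_finset_iff_exists_fun'] at hmem
  obtain ⟨b, hb⟩ := hmem
  exact ⟨b, hb.symm⟩
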